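/- arXiv:math/0607251 — 4 statements merged into one kernel-verified Lean document; each statement's English description precedes it below -/
import Mathlib

section
/- Fix an integer e>1 and a charge (s_0,s_1)∈ℕ². Let γ=(a,b,c) and γ_1=(a_1,b_1,c_1) be two nodes of a bipartition λ=(λ^(0),λ^(1)) having the same residue mod e with respect to the charge (s_0,s_1). Set γ'=(a,b,1−c) and γ_1'=(a_1,b_1,1−c_1), which are nodes of the swapped bipartition (λ^(1),λ^(0)) having the same residue mod e with respect to the charge (s_1,s_0+e). Then γ >_{(s_0,s_1)} γ_1 if and only if γ' >_{(s_1,s_0+e)} γ_1'. -/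
open Finset

/-- A node `(a, b, c)`: row index `a ≥ 1`, column index `b ≥ 1`, component `c ∈ {0,1}`. -/
abbrev Node : Type := ℕ × ℕ × Fin 2

namespace UglovPaper

/-- Row index of a node. -/
def nrow (γ : Node) : ℕ := γ.1

/-- Column index of a node. -/
def ncol (γ : Node) : ℕ := γ.2.1

/-- Component of a node. -/
def ncomp (γ : Node) : Fin 2 := γ.2.2

/-- A finite set of nodes is the Young diagram of a bipartition iff all indices are `≥ 1`
and the set is closed under moving left in a row and up in a column (in each component). -/
def IsDiagram (D : Finset Node) : Prop :=
  (∀ γ ∈ D, 1 ≤ nrow γ ∧ 1 ≤ ncol γ) ∧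
  (∀ γ ∈ D, ∀ b' : ℕ, 1 ≤ b' → b' ≤ ncol γ → (nrow γ, b', ncomp γ) ∈ D) ∧
  (∀ γ ∈ D, 2 ≤ nrow γ → (nrow γ - 1, ncol γ, ncomp γ) ∈ D)

/-- `part D c a` is the `a`-th part `λ^(c)_a` of the bipartition with diagram `D`. -/
def part (D : Finset Node) (c : Fin 2) (a : ℕ) : ℕ :=
  (D.filter (fun γ => nrow γ = a ∧ ncomp γ = c)).card

/-- The content `b - a + s_c` of a node `(a,b,c)` for the charge `s`. -/
def cont (s : Fin 2 → ℤ) (γ : Node) : ℤ := (ncol γ : ℤ) - (nrow γ : ℤ) + s (ncomp γ)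

/-- The residue mod `e` of a node for the charge `s`. -/
def res (e : ℕ) (s : Fin 2 → ℤ) (γ : Node) : ZMod e := ((cont s γ : ℤ) : ZMod e)

/-- The order `γ <_{(s₀,s₁)} γ'` on nodes. -/
def chargeLT (s : Fin 2 → ℤ) (γ γ' : Node) : Prop :=
  cont s γ < cont s γ' ∨ (cont s γ = cont s γ' ∧ ncomp γ' < ncomp γ)

/-- The positive asymptotic order `γ <_{(v₀,v₁)₊} γ'`. -/
def posLT (γ γ' : Node) : Prop :=
  ncomp γ' < ncomp γ ∨ (ncomp γ = ncomp γ' ∧ nrow γ' < nrow γ)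

/-- The negative asymptotic order `γ <_{(v₀,v₁)₋} γ'`. -/
def negLT (γ γ' : Node) : Prop :=
  ncomp γ < ncomp γ' ∨ (ncomp γ = ncomp γ' ∧ nrow γ' < nrow γ)

/-- `γ` is a removable node of the diagram `D`. -/
def Removable (D : Finset Node) (γ : Node) : Prop := γ ∈ D ∧ IsDiagram (D.erase γ)

/-- `γ` is an addable node of the diagram `D`. -/
def Addable (D : Finset Node) (γ : Node) : Prop := γ ∉ D ∧ IsDiagram (insert γ D)

/-- `γ` is a normal `i`-node of `D` with respect to the order `lt` and the residue map `r`: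
it is a removable `i`-node, and for every `i`-node `η` above it, the number of addable
`i`-nodes in the interval `(γ, η]` does not exceed the number of removable `i`-nodes there.
This is equivalent to surviving the `RA`-deletion process. -/
def NormalNode {α : Type*} (D : Finset Node) (lt : Node → Node → Prop)
    (r : Node → α) (i : α) (γ : Node) : Prop :=
  Removable D γ ∧ r γ = i ∧
  ∀ η : Node, r η = i → lt γ η →
    {x : Node | Addable D x ∧ r x = i ∧ lt γ x ∧ (lt x η ∨ x = η)}.ncard ≤
    {x : Node | Removable D x ∧ r x = i ∧ lt γ x ∧ (lt x η ∨ x = η)}.ncard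

/-- `γ` is the good `i`-node of `D`: the minimal normal `i`-node for the order `lt`. -/
def GoodNode {α : Type*} (D : Finset Node) (lt : Node → Node → Prop)
    (r : Node → α) (i : α) (γ : Node) : Prop :=
  NormalNode D lt r i γ ∧ ∀ δ : Node, NormalNode D lt r i δ → δ = γ ∨ lt γ δ

/-- The recursively defined class of bipartitions labelling the crystal:
the empty bipartition has rank `0`, and a bipartition of rank `n + 1` belongs iff
removing some good `i`-node yields a member of rank `n`. -/
inductive CrystalSet {α : Type*} (lt : Node → Node → Prop) (r : Node → α) :
    ℕ → Finset Node → Prop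
  | empty : CrystalSet lt r 0 ∅
  | step {n : ℕ} {D : Finset Node} {γ : Node} (i : α) :
      IsDiagram D → GoodNode D lt r i γ →
      CrystalSet lt r n (D.erase γ) → CrystalSet lt r (n + 1) D

/-- The set `Φ_{e,n}^{(s₀,s₁)}` of Uglov bipartitions. -/
def UglovSet (e : ℕ) (s : Fin 2 → ℤ) : ℕ → Finset Node → Prop :=
  CrystalSet (chargeLT s) (res e s)

/-- The set `Φ_{e,n}^{(v₀,v₁)₊}` of positive Kleshchev bipartitions. -/
def KleshchevPos (e : ℕ) (v : Fin 2 → ℤ) : ℕ → Finset Node → Prop :=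
  CrystalSet posLT (res e v)

/-- The set `Φ_{e,n}^{(v₀,v₁)₋}` of negative Kleshchev bipartitions. -/
def KleshchevNeg (e : ℕ) (v : Fin 2 → ℤ) : ℕ → Finset Node → Prop :=
  CrystalSet negLT (res e v)

/-- Swapping the two components of a bipartition: `(λ⁽⁰⁾,λ⁽¹⁾) ↦ (λ⁽¹⁾,λ⁽⁰⁾)`. -/
def swapDiagram (D : Finset Node) : Finset Node :=
  D.image (fun γ => (γ.1, γ.2.1, γ.2.2 + 1))

/-! ### Symbols -/

/-- `beta s m D c j` is the `j`-th entry `β^(c)_j = λ^(c)_j − j + s_c + m` of the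
`s`-symbol of `D`, for `1 ≤ j ≤ m + s_c`. -/
def beta (s : Fin 2 → ℕ) (m : ℕ) (D : Finset Node) (c : Fin 2) (j : ℕ) : ℕ :=
  part D c j + (m + s c) - j

/-- The multiset of entries of the row `β^(c)` of the `s`-symbol. -/
def rowM (s : Fin 2 → ℕ) (m : ℕ) (D : Finset Node) (c : Fin 2) : Multiset ℕ :=
  (Finset.Icc 1 (m + s c)).val.map (beta s m D c)

/-- The list of the values `θ(β⁽⁰⁾_{m+s₀}), θ(β⁽⁰⁾_{m+s₀-1}), …` chosen greedily:
at step `k` (handling `p = m + s₀ - k`) we choose the largest entry of the top row not yet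
used that is `≤ β⁽⁰⁾_p`. -/
def thetaList (s : Fin 2 → ℕ) (m : ℕ) (D : Finset Node) : ℕ → List ℕ
  | 0 => []
  | k + 1 =>
      let prev := thetaList s m D k
      prev ++ [WithBot.unbotD 0 ((((Finset.Icc 1 (m + s 1)).image (beta s m D 1)).filter
          (fun y => y ∉ prev ∧ y ≤ beta s m D 0 (m + s 0 - k))).max)]

/-- The greedy injection `θ`, as a function of the index `p ∈ {1, …, m + s₀}`:
`theta s m D p = θ(β⁽⁰⁾_p)`. -/
def theta (s : Fin 2 → ℕ) (m : ℕ) (D : Finset Node) (p : ℕ) : ℕ :=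
  (thetaList s m D (m + s 0)).getD (m + s 0 - p) 0

/-- The bottom row of the symbol obtained by exchanging the entries of every pair:
it is the multiset of the values `θ(β⁽⁰⁾_p)`. -/
def bottomRowNew (s : Fin 2 → ℕ) (m : ℕ) (D : Finset Node) : Multiset ℕ :=
  (Finset.Icc 1 (m + s 0)).val.map (theta s m D)

/-- The top row of the symbol obtained by exchanging the entries of every pair:
all entries of both rows that did not go to the new bottom row. -/
def topRowNew (s : Fin 2 → ℕ) (m : ℕ) (D : Finset Node) : Multiset ℕ :=
  (rowM s m D 0 + rowM s m D 1) - bottomRowNew s m D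

/-- The rows of the symbol of `Υ(λ)`. -/
def newRow (s : Fin 2 → ℕ) (m : ℕ) (D : Finset Node) (c : Fin 2) : Multiset ℕ :=
  if c = 0 then bottomRowNew s m D else topRowNew s m D

/-- The `j`-th largest entry of a multiset of naturals (`j ≥ 1`). -/
def rowEntry (B : Multiset ℕ) (j : ℕ) : ℕ :=
  (B.sort (· ≤ ·)).getD (Multiset.card B - j) 0

/-- The `j`-th part of the partition encoded by a multiset of `card B` distinct
beta-numbers: `λ_j = (j-th largest entry) + j - card B`. -/
def rowPart (B : Multiset ℕ) (j : ℕ) : ℕ :=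
  if 1 ≤ j ∧ j ≤ Multiset.card B then rowEntry B j + j - Multiset.card B else 0

/-- The Young diagram of the bipartition with parts `p`, within the box of size `N`. -/
def toDiagram (p : Fin 2 → ℕ → ℕ) (N : ℕ) : Finset Node :=
  ((Finset.Icc 1 N) ×ˢ (Finset.Icc 1 N) ×ˢ (Finset.univ : Finset (Fin 2))).filter
    (fun γ => γ.2.1 ≤ p γ.2.2 γ.1)

/-- The map `Υ_{(s₀,s₁)}`: exchange the two entries of every pair of the `s`-symbol and
reorder the rows; `Upsilon s m D` is the diagram of the resulting bipartition. -/
def Upsilon (s : Fin 2 → ℕ) (m : ℕ) (D : Finset Node) : Finset Node :=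
  toDiagram (fun c j => rowPart (newRow s m D c) j) D.card

/-- The list of values `τ(α⁽⁰⁾_1), τ(α⁽⁰⁾_2), …` chosen greedily: at step `k + 1`
(handling `p = k + 1`) we choose the smallest entry of the top row `Top` not yet used
that is `≥ b (k+1)`, where `b p` is the `p`-th entry of the bottom row. -/
def tauList (Top : Finset ℕ) (b : ℕ → ℕ) : ℕ → List ℕ
  | 0 => []
  | k + 1 =>
      let prev := tauList Top b k
      prev ++ [WithTop.untopD 0 ((Top.filter (fun y => y ∉ prev ∧ b (k + 1) ≤ y)).min)]

/-- The greedy injection `τ`, as a function of the index `p ∈ {1, …, P}`. -/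
def tau (Top : Finset ℕ) (b : ℕ → ℕ) (P : ℕ) (p : ℕ) : ℕ :=
  (tauList Top b P).getD (p - 1) 0

end UglovPaper

/-!
Passing from the charge `(s₀, s₁)` to `(s₁, s₀ + e)` and swapping components leaves the
content of a node of component `1` unchanged and raises the content of a node of component `0`
by `e`. Contents of nodes of equal residue differ by a multiple of `e`, so for them a shift by
`e` turns a non-strict comparison into a strict one; this is exactly compensated by the
tie-break on components, which is reversed by the swap.
-/

theorem Int.ModEq.le_iff_lt_add {n x y : ℤ} (hn : 0 < n) (h : x ≡ y [ZMOD n]) :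
    y ≤ x ↔ y < x + n := by
  obtain ⟨k, hk⟩ := h.dvd
  calc y ≤ x ↔ n * k ≤ n * 0 := by rw [mul_zero, ← hk, sub_nonpos]
    _ ↔ k < 1 := by rw [Int.mul_le_mul_left hn]; omega
    _ ↔ n * k < n := (mul_lt_iff_lt_one_right hn).symm
    _ ↔ y < x + n := by rw [← hk, sub_lt_iff_lt_add']

namespace UglovPaper

theorem cont_swap (s₀ s₁ e : ℤ) (a b : ℕ) (c : Fin 2) :
    cont ![s₁, s₀ + e] (a, b, c + 1) = cont ![s₀, s₁] (a, b, c) + if c = 0 then e else 0 := by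
  fin_cases c <;> simp [cont, ncol, nrow, ncomp]
  ring

theorem chargeLT_swap_iff {s₀ s₁ e : ℤ} (he : 0 < e) {a b a₁ b₁ : ℕ} {c c₁ : Fin 2}
    (h : cont ![s₀, s₁] (a, b, c) ≡ cont ![s₀, s₁] (a₁, b₁, c₁) [ZMOD e]) :
    chargeLT ![s₀, s₁] (a₁, b₁, c₁) (a, b, c) ↔
      chargeLT ![s₁, s₀ + e] (a₁, b₁, c₁ + 1) (a, b, c + 1) := by
  have hle := h.le_iff_lt_add he
  have hge := h.symm.le_iff_lt_add he
  unfold chargeLT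
  rw [cont_swap, cont_swap]
  generalize cont ![s₀, s₁] (a, b, c) = x at *
  generalize cont ![s₀, s₁] (a₁, b₁, c₁) = y at *
  fin_cases c <;> fin_cases c₁ <;> simp [ncomp] <;> omega

theorem order_swap_general (e : ℕ) (he : 1 < e) (s₀ s₁ : ℕ)
    (a b : ℕ) (c : Fin 2) (a₁ b₁ : ℕ) (c₁ : Fin 2)
    (hres : res e ![(s₀ : ℤ), (s₁ : ℤ)] (a, b, c) =
      res e ![(s₀ : ℤ), (s₁ : ℤ)] (a₁, b₁, c₁)) :
    chargeLT ![(s₀ : ℤ), (s₁ : ℤ)] (a₁, b₁, c₁) (a, b, c) ↔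
      chargeLT ![(s₁ : ℤ), (s₀ : ℤ) + e] (a₁, b₁, c₁ + 1) (a, b, c + 1) :=
  chargeLT_swap_iff (by omega) ((ZMod.intCast_eq_intCast_iff _ _ _).mp hres)

/-- for two nodes of a bipartition with the same residue mod `e`,
`γ >_{(s₀,s₁)} γ₁` iff the component-swapped nodes satisfy `γ' >_{(s₁,s₀+e)} γ₁'`. -/
theorem order_swap (e : ℕ) (he : 1 < e) (s₀ s₁ : ℕ)
    (D : Finset Node) (hD : IsDiagram D)
    (a b : ℕ) (c : Fin 2) (a₁ b₁ : ℕ) (c₁ : Fin 2)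
    (hγ : ((a, b, c) : Node) ∈ D) (hγ₁ : ((a₁, b₁, c₁) : Node) ∈ D)
    (hres : res e ![(s₀ : ℤ), (s₁ : ℤ)] (a, b, c) =
      res e ![(s₀ : ℤ), (s₁ : ℤ)] (a₁, b₁, c₁)) :
    chargeLT ![(s₀ : ℤ), (s₁ : ℤ)] (a₁, b₁, c₁) (a, b, c) ↔
      chargeLT ![(s₁ : ℤ), (s₀ : ℤ) + e] (a₁, b₁, c₁ + 1) (a, b, c + 1) :=
  order_swap_general e he s₀ s₁ a b c a₁ b₁ c₁ hres

end UglovPaper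
end

section
/- Fix an integer e>1, a charge (s_0,s_1)∈ℤ², and (v_0,v_1)∈{0,…,e−1}² with v_0 ≡ s_0 (mod e) and v_1 ≡ s_1 (mod e). If s_1 − s_0 > n − 1, then the set of Uglov bipartitions for (s_0,s_1) coincides with the set of negative Kleshchev bipartitions: Φ_{e,n}^{(s_0,s_1)} = Φ_{e,n}^{(v_0,v_1)−}. -/
open Finset

/-!
When `#λ ≤ s₁ - s₀`, the charged order `<_{(s₀,s₁)}` and the negative asymptotic order agree on
any two addable or removable `i`-nodes of `λ` at least one of which is removable: within a
component the content decreases strictly down the rows, and across components the charge gap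
puts the node of `λ⁽⁰⁾` below the node of `λ⁽¹⁾`. Pairs of addable nodes may be
ordered differently, but this does not affect which nodes are normal, so both orders have the
same good nodes on all bipartitions of rank at most `n`, and the two recursions coincide.
-/

theorem Finset.exists_greatest_of_trichotomous {β : Type*} {r : β → β → Prop} [IsTrans β r]
    {t : Finset β} (ht : t.Nonempty)
    (htri : ∀ x ∈ t, ∀ y ∈ t, x = y ∨ r x y ∨ r y x) :
    ∃ m ∈ t, ∀ x ∈ t, x = m ∨ r x m := by
  induction ht using Finset.Nonempty.cons_induction with
  | singleton a => exact ⟨a, mem_singleton_self a, fun x hx => Or.inl (mem_singleton.1 hx)⟩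
  | cons a t ha ht ih =>
    obtain ⟨m, hm, hmax⟩ :=
      ih fun x hx y hy => htri x (mem_cons_of_mem hx) y (mem_cons_of_mem hy)
    rcases htri a (mem_cons_self a t) m (mem_cons_of_mem hm) with rfl | ham | hma
    · exact absurd hm ha
    · refine ⟨m, mem_cons_of_mem hm, fun x hx => ?_⟩
      rcases mem_cons.1 hx with rfl | hx
      exacts [Or.inr ham, hmax x hx]
    · refine ⟨a, mem_cons_self a t, fun x hx => ?_⟩
      rcases mem_cons.1 hx with rfl | hx
      · exact Or.inl rfl
      · rcases hmax x hx with rfl | hxm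
        exacts [Or.inr hma, Or.inr (_root_.trans hxm hma)]

namespace UglovPaper

def compCard (D : Finset Node) (c : Fin 2) : ℕ := #(D.filter fun γ => ncomp γ = c)

def AddableOrRemovable (D : Finset Node) (x : Node) : Prop := Removable D x ∨ Addable D x

section Diagram

variable {D : Finset Node} {x y : Node}

theorem compCard_le_card (c : Fin 2) : compCard D c ≤ #D := card_filter_le _ _

theorem compCard_zero_add_compCard_one (D : Finset Node) : compCard D 0 + compCard D 1 = #D := by
  rw [compCard, compCard, ← card_filter_add_card_filter_not (s := D) (fun γ => ncomp γ = 0)]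
  congr 2
  exact filter_congr fun γ _ => by omega

theorem le_compCard_of_injective {m : ℕ} {c : Fin 2} (f : ℕ → Node) (hf : f.Injective)
    (hmem : ∀ k, 1 ≤ k → k ≤ m → f k ∈ D ∧ ncomp (f k) = c) : m ≤ compCard D c := by
  simpa [compCard] using card_le_card_of_injOn (s := Icc 1 m) f
    (fun k hk => by
      obtain ⟨h1, h2⟩ := mem_Icc.1 hk
      simpa using hmem k h1 h2)
    hf.injOn

theorem IsDiagram.mem_of_le_nrow (hD : IsDiagram D) (hx : x ∈ D) {a : ℕ} (ha : 1 ≤ a)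
    (hax : a ≤ nrow x) : ((a, ncol x, ncomp x) : Node) ∈ D := by
  induction hax using Nat.decreasingInduction with
  | self => exact hx
  | of_succ k _ ih =>
    simpa [nrow, ncol, ncomp] using hD.2.2 _ (ih (by omega)) (show 2 ≤ k + 1 by omega)

theorem IsDiagram.ncol_le_compCard (hD : IsDiagram D) (hx : x ∈ D) :
    ncol x ≤ compCard D (ncomp x) :=
  le_compCard_of_injective (fun b => (nrow x, b, ncomp x)) (fun _ _ h => congrArg (·.2.1) h)
    fun _ h1 h2 => ⟨hD.2.1 x hx _ h1 h2, rfl⟩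

theorem IsDiagram.nrow_le_compCard (hD : IsDiagram D) (hx : x ∈ D) :
    nrow x ≤ compCard D (ncomp x) :=
  le_compCard_of_injective (fun a => (a, ncol x, ncomp x)) (fun _ _ h => congrArg (·.1) h)
    fun _ h1 h2 => ⟨hD.mem_of_le_nrow hx h1 h2, rfl⟩

theorem Addable.finite (D : Finset Node) : {x | Addable D x}.Finite := by
  refine ((Set.finite_Iic (#D + 1)).prod ((Set.finite_Iic (#D + 1)).prod Set.finite_univ)).subset
    fun x hx => ?_
  have hmem : x ∈ insert x D := mem_insert_self x D
  have hcard : compCard (insert x D) (ncomp x) ≤ #D + 1 :=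
    (compCard_le_card _).trans (card_insert_le x D)
  have hrow := hx.2.nrow_le_compCard hmem
  have hcol := hx.2.ncol_le_compCard hmem
  simp only [Set.mem_prod, Set.mem_Iic, Set.mem_univ, and_true]
  exact ⟨hrow.trans hcard, hcol.trans hcard⟩

namespace AddableOrRemovable

theorem one_le (hD : IsDiagram D) (hx : AddableOrRemovable D x) : 1 ≤ nrow x ∧ 1 ≤ ncol x :=
  hx.elim (fun h => hD.1 x h.1) fun h => h.2.1 x (mem_insert_self x D)

theorem mem_of_lt_ncol (hD : IsDiagram D) (hx : AddableOrRemovable D x) {b : ℕ} (hb : 1 ≤ b)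
    (hbx : b < ncol x) : ((nrow x, b, ncomp x) : Node) ∈ D := by
  rcases hx with h | h
  · exact hD.2.1 x h.1 b hb hbx.le
  · rcases mem_insert.1 (h.2.2.1 x (mem_insert_self x D) b hb hbx.le) with h' | h'
    · exact absurd (congrArg (·.2.1) h') hbx.ne
    · exact h'

theorem mem_of_lt_nrow (hD : IsDiagram D) (hx : AddableOrRemovable D x) {a : ℕ} (ha : 1 ≤ a)
    (hax : a < nrow x) : ((a, ncol x, ncomp x) : Node) ∈ D := by
  rcases hx with h | h
  · exact hD.mem_of_le_nrow h.1 ha hax.le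
  · rcases mem_insert.1 (h.2.mem_of_le_nrow (mem_insert_self x D) ha hax.le) with h' | h'
    · exact absurd (congrArg (·.1) h') hax.ne
    · exact h'

theorem le_ncol_of_mem (hD : IsDiagram D) (hx : AddableOrRemovable D x) {b : ℕ}
    (hb : ((nrow x, b, ncomp x) : Node) ∈ D) : b ≤ ncol x := by
  by_contra! hxb
  rcases hx with h | h
  · -- the node right of `x` would survive the removal of `x`, which forces `x` back in
    have hright : ((nrow x, ncol x + 1, ncomp x) : Node) ∈ D.erase x := by
      refine mem_erase.2 ⟨fun h' => by simp [Prod.ext_iff, ncol] at h', ?_⟩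
      exact hD.2.1 _ hb _ (by omega) hxb
    simpa [nrow, ncol, ncomp] using h.2.2.1 _ hright (ncol x) (hD.1 x h.1).2 (Nat.le_succ _)
  · exact h.1 (hD.2.1 _ hb _ (h.2.1 x (mem_insert_self x D)).2 hxb.le)

theorem ncol_le_compCard_succ (hD : IsDiagram D) (hx : AddableOrRemovable D x) :
    ncol x ≤ compCard D (ncomp x) + 1 := by
  have := le_compCard_of_injective (m := ncol x - 1) (c := ncomp x) (fun b => (nrow x, b, ncomp x))
    (fun _ _ h => congrArg (·.2.1) h) fun _ h1 h2 => ⟨hx.mem_of_lt_ncol hD h1 (by omega), rfl⟩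
  omega

theorem nrow_le_compCard_succ (hD : IsDiagram D) (hx : AddableOrRemovable D x) :
    nrow x ≤ compCard D (ncomp x) + 1 := by
  have := le_compCard_of_injective (m := nrow x - 1) (c := ncomp x) (fun a => (a, ncol x, ncomp x))
    (fun _ _ h => congrArg (·.1) h) fun _ h1 h2 => ⟨hx.mem_of_lt_nrow hD h1 (by omega), rfl⟩
  omega

theorem ncol_le_succ (hD : IsDiagram D) (hx : AddableOrRemovable D x)
    (hy : AddableOrRemovable D y) (hrow : nrow x = nrow y) (hc : ncomp x = ncomp y) :
    ncol y ≤ ncol x + 1 := by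
  by_contra! h
  have hmem := hy.mem_of_lt_ncol hD (b := ncol x + 1) (by omega) h
  rw [← hrow, ← hc] at hmem
  have := hx.le_ncol_of_mem hD hmem
  omega

end AddableOrRemovable

end Diagram

section Content

variable {D : Finset Node} {x y : Node} {s : Fin 2 → ℤ} {e : ℕ}

theorem cont_lt_cont_of_nrow_lt (hD : IsDiagram D) (hx : AddableOrRemovable D x)
    (hy : AddableOrRemovable D y) (hc : ncomp x = ncomp y) (hrow : nrow x < nrow y) :
    cont s y < cont s x := by
  have hmem := hy.mem_of_lt_nrow hD (hx.one_le hD).1 hrow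
  rw [← hc] at hmem
  have := hx.le_ncol_of_mem hD hmem
  unfold cont
  rw [hc]
  omega

/-- The row of `x` and the column of `y` together hold at most `#D + 1` nodes, so the charge
gap `s 1 - s 0 ≥ #D` separates the contents. -/
theorem cont_lt_cont_of_ncomp_lt (hD : IsDiagram D) (hcard : (#D : ℤ) ≤ s 1 - s 0)
    (hx : AddableOrRemovable D x) (hy : AddableOrRemovable D y) (hx0 : ncomp x = 0)
    (hy1 : ncomp y = 1) (hrem : Removable D x ∨ Removable D y) : cont s x < cont s y := by
  have hsum := compCard_zero_add_compCard_one D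
  have hxpos := hx.one_le hD
  have hypos := hy.one_le hD
  have hxcol := hx.ncol_le_compCard_succ hD
  have hyrow := hy.nrow_le_compCard_succ hD
  have hsharp : ncol x + nrow y ≤ compCard D (ncomp x) + compCard D (ncomp y) + 1 := by
    rcases hrem with h | h
    · have := hD.ncol_le_compCard h.1
      omega
    · have := hD.nrow_le_compCard h.1
      omega
  unfold cont
  rw [hx0, hy1] at *
  omega

theorem eq_of_nrow_eq (he : 1 < e) (hD : IsDiagram D) (hx : AddableOrRemovable D x)
    (hy : AddableOrRemovable D y) (hrow : nrow x = nrow y) (hc : ncomp x = ncomp y)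
    (hres : res e s x = res e s y) : x = y := by
  have hyx := hx.ncol_le_succ hD hy hrow hc
  have hxy := hy.ncol_le_succ hD hx hrow.symm hc.symm
  have hdvd : (e : ℤ) ∣ (ncol y : ℤ) - ncol x := by
    have := ((ZMod.intCast_eq_intCast_iff _ _ _).1 hres).dvd
    unfold cont at this
    rwa [hrow, hc, add_sub_add_right_eq_sub, sub_sub_sub_cancel_right] at this
  have hcol := Int.eq_zero_of_abs_lt_dvd hdvd (by rw [abs_lt]; omega)
  exact Prod.ext hrow (Prod.ext (show ncol x = ncol y by omega) hc)

end Content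

section Orders

variable {D : Finset Node} {x y : Node} {s : Fin 2 → ℤ} {e : ℕ}

instance : IsTrans Node (chargeLT s) where
  trans a b c := by
    rintro (h₁ | ⟨h₁, h₁'⟩) (h₂ | ⟨h₂, h₂'⟩)
    · exact Or.inl (h₁.trans h₂)
    · exact Or.inl (h₂ ▸ h₁)
    · exact Or.inl (h₁ ▸ h₂)
    · exact Or.inr ⟨h₁.trans h₂, h₂'.trans h₁'⟩

instance : IsTrans Node negLT where
  trans a b c := by
    rintro (h₁ | ⟨h₁, h₁'⟩) (h₂ | ⟨h₂, h₂'⟩)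
    · exact Or.inl (h₁.trans h₂)
    · exact Or.inl (h₂ ▸ h₁)
    · exact Or.inl (h₁ ▸ h₂)
    · exact Or.inr ⟨h₁.trans h₂, h₂'.trans h₁'⟩

theorem chargeLT_asymm (h : chargeLT s x y) : ¬ chargeLT s y x := by
  unfold chargeLT at *
  omega

theorem negLT_trichotomous (he : 1 < e) (hD : IsDiagram D) (hx : AddableOrRemovable D x)
    (hy : AddableOrRemovable D y) (hres : res e s x = res e s y) :
    x = y ∨ negLT x y ∨ negLT y x := by
  rcases lt_trichotomy (ncomp x) (ncomp y) with hc | hc | hc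
  · exact Or.inr (Or.inl (Or.inl hc))
  · rcases lt_trichotomy (nrow x) (nrow y) with hr | hr | hr
    · exact Or.inr (Or.inr (Or.inr ⟨hc.symm, hr⟩))
    · exact Or.inl (eq_of_nrow_eq he hD hx hy hr hc hres)
    · exact Or.inr (Or.inl (Or.inr ⟨hc, hr⟩))
  · exact Or.inr (Or.inr (Or.inl hc))

theorem chargeLT_of_negLT (hD : IsDiagram D) (hcard : (#D : ℤ) ≤ s 1 - s 0)
    (hx : AddableOrRemovable D x) (hy : AddableOrRemovable D y)
    (hrem : Removable D x ∨ Removable D y) (h : negLT x y) : chargeLT s x y := by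
  rcases h with hc | ⟨hc, hr⟩
  · have hx0 : ncomp x = 0 := by omega
    have hy1 : ncomp y = 1 := by omega
    exact Or.inl (cont_lt_cont_of_ncomp_lt hD hcard hx hy hx0 hy1 hrem)
  · exact Or.inl (cont_lt_cont_of_nrow_lt hD hy hx hc.symm hr)

theorem chargeLT_or_chargeLT_of_negLT (hD : IsDiagram D) (hx : AddableOrRemovable D x)
    (hy : AddableOrRemovable D y) (h : negLT x y) : chargeLT s x y ∨ chargeLT s y x := by
  rcases h with hc | ⟨hc, hr⟩
  · rcases lt_trichotomy (cont s x) (cont s y) with h | h | h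
    · exact Or.inl (Or.inl h)
    · exact Or.inr (Or.inr ⟨h.symm, hc⟩)
    · exact Or.inr (Or.inl h)
  · exact Or.inl (Or.inl (cont_lt_cont_of_nrow_lt hD hy hx hc.symm hr))

theorem chargeLT_trichotomous (he : 1 < e) (hD : IsDiagram D) (hx : AddableOrRemovable D x)
    (hy : AddableOrRemovable D y) (hres : res e s x = res e s y) :
    x = y ∨ chargeLT s x y ∨ chargeLT s y x := by
  rcases negLT_trichotomous he hD hx hy hres with hxy | hxy | hyx
  · exact Or.inl hxy
  · exact Or.inr (chargeLT_or_chargeLT_of_negLT hD hx hy hxy)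
  · exact Or.inr (chargeLT_or_chargeLT_of_negLT hD hy hx hyx).symm

theorem chargeLT_iff_negLT (he : 1 < e) (hD : IsDiagram D) (hcard : (#D : ℤ) ≤ s 1 - s 0)
    (hx : AddableOrRemovable D x) (hy : AddableOrRemovable D y)
    (hres : res e s x = res e s y) (hrem : Removable D x ∨ Removable D y) :
    chargeLT s x y ↔ negLT x y := by
  refine ⟨fun h => ?_, chargeLT_of_negLT hD hcard hx hy hrem⟩
  rcases negLT_trichotomous he hD hx hy hres with rfl | hxy | hyx
  · exact absurd h (chargeLT_asymm h)
  · exact hxy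
  · exact absurd (chargeLT_of_negLT hD hcard hy hx hrem.symm hyx) (chargeLT_asymm h)

end Orders

section Transfer

variable {α : Type*} {D : Finset Node} {lt₁ lt₂ : Node → Node → Prop} [IsTrans Node lt₁]
  [IsTrans Node lt₂] {r : Node → α} {i : α} {γ : Node}

/-- The orders may disagree on pairs of addable nodes, but the addable nodes of an
`lt₂`-interval `(γ, η]` all lie in the `lt₁`-interval `(γ, m]`, where `m` is the
`lt₁`-greatest of them. -/
theorem NormalNode.of_agree
    (htri : ∀ x y, Addable D x → Addable D y → r x = r y → x = y ∨ lt₁ x y ∨ lt₁ y x)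
    (hagree : ∀ x y, AddableOrRemovable D x → AddableOrRemovable D y → r x = r y →
      Removable D x ∨ Removable D y → (lt₁ x y ↔ lt₂ x y))
    (hγ : NormalNode D lt₁ r i γ) : NormalNode D lt₂ r i γ := by
  obtain ⟨hγR, hγi, hcount⟩ := hγ
  have hagreeγ : ∀ x, AddableOrRemovable D x → r x = i → (lt₁ γ x ↔ lt₂ γ x) :=
    fun x hx hxi => hagree γ x (Or.inl hγR) hx (hγi.trans hxi.symm) (Or.inl hγR)
  refine ⟨hγR, hγi, fun η _ _ => ?_⟩
  set T := {x | Addable D x ∧ r x = i ∧ lt₂ γ x ∧ (lt₂ x η ∨ x = η)}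
  have hTfin : T.Finite := (Addable.finite D).subset fun x hx => hx.1
  rcases T.eq_empty_or_nonempty with hT | hT
  · simp [hT]
  obtain ⟨m, hmT, hmax⟩ := Finset.exists_greatest_of_trichotomous
    (hTfin.toFinset_nonempty.2 hT) fun x hx y hy => by
      rw [Set.Finite.mem_toFinset] at hx hy
      exact htri x y hx.1 hy.1 (hx.2.1.trans hy.2.1.symm)
  rw [Set.Finite.mem_toFinset] at hmT
  obtain ⟨hmA, hmi, hγm, hmη⟩ := hmT
  calc T.ncard
      ≤ {x | Addable D x ∧ r x = i ∧ lt₁ γ x ∧ (lt₁ x m ∨ x = m)}.ncard := by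
        refine Set.ncard_le_ncard (fun x hx => ⟨hx.1, hx.2.1, ?_, ?_⟩)
          ((Addable.finite D).subset fun x hx => hx.1)
        · exact (hagreeγ x (Or.inr hx.1) hx.2.1).2 hx.2.2.1
        · exact (hmax x (hTfin.mem_toFinset.2 hx)).symm
    _ ≤ {x | Removable D x ∧ r x = i ∧ lt₁ γ x ∧ (lt₁ x m ∨ x = m)}.ncard :=
        hcount m hmi ((hagreeγ m (Or.inr hmA) hmi).2 hγm)
    _ ≤ {x | Removable D x ∧ r x = i ∧ lt₂ γ x ∧ (lt₂ x η ∨ x = η)}.ncard := by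
        refine Set.ncard_le_ncard (fun x ⟨hxR, hxi, hγx, hxm⟩ => ⟨hxR, hxi, ?_, ?_⟩)
          (D.finite_toSet.subset fun x hx => hx.1.1)
        · exact (hagreeγ x (Or.inl hxR) hxi).1 hγx
        · have hxm₂ : lt₂ x m := by
            rcases hxm with hxm | rfl
            · exact (hagree x m (Or.inl hxR) (Or.inr hmA) (hxi.trans hmi.symm) (Or.inl hxR)).1 hxm
            · exact absurd hxR.1 hmA.1
          rcases hmη with hmη | rfl
          exacts [Or.inl (_root_.trans hxm₂ hmη), Or.inl hxm₂]

theorem goodNode_iff_of_agree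
    (htri₁ : ∀ x y, Addable D x → Addable D y → r x = r y → x = y ∨ lt₁ x y ∨ lt₁ y x)
    (htri₂ : ∀ x y, Addable D x → Addable D y → r x = r y → x = y ∨ lt₂ x y ∨ lt₂ y x)
    (hagree : ∀ x y, AddableOrRemovable D x → AddableOrRemovable D y → r x = r y →
      Removable D x ∨ Removable D y → (lt₁ x y ↔ lt₂ x y)) :
    GoodNode D lt₁ r i γ ↔ GoodNode D lt₂ r i γ := by
  have hnormal : ∀ δ, NormalNode D lt₁ r i δ ↔ NormalNode D lt₂ r i δ := fun δ =>
    ⟨.of_agree htri₁ hagree,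
      .of_agree htri₂ fun x y hx hy hr hrem => (hagree x y hx hy hr hrem).symm⟩
  have hagree_normal : ∀ δ, NormalNode D lt₁ r i γ → NormalNode D lt₁ r i δ →
      (lt₁ γ δ ↔ lt₂ γ δ) := fun δ hγ hδ =>
    hagree γ δ (Or.inl hγ.1) (Or.inl hδ.1) (hγ.2.1.trans hδ.2.1.symm) (Or.inl hγ.1)
  constructor
  · rintro ⟨hγ, hmin⟩
    refine ⟨(hnormal γ).1 hγ, fun δ hδ => ?_⟩
    have hδ₁ := (hnormal δ).2 hδ
    exact (hmin δ hδ₁).imp_right (hagree_normal δ hγ hδ₁).1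
  · rintro ⟨hγ, hmin⟩
    have hγ₁ := (hnormal γ).2 hγ
    exact ⟨hγ₁, fun δ hδ => (hmin δ ((hnormal δ).1 hδ)).imp_right (hagree_normal δ hγ₁ hδ).2⟩

end Transfer

theorem goodNode_chargeLT_iff_negLT {D : Finset Node} {s : Fin 2 → ℤ} {e : ℕ} (he : 1 < e)
    (hD : IsDiagram D) (hcard : (#D : ℤ) ≤ s 1 - s 0) (i : ZMod e) (γ : Node) :
    GoodNode D (chargeLT s) (res e s) i γ ↔ GoodNode D negLT (res e s) i γ :=
  goodNode_iff_of_agree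
    (fun _ _ hx hy => chargeLT_trichotomous he hD (Or.inr hx) (Or.inr hy))
    (fun _ _ hx hy => negLT_trichotomous he hD (Or.inr hx) (Or.inr hy))
    fun _ _ hx hy hres => chargeLT_iff_negLT he hD hcard hx hy hres

theorem CrystalSet.card_eq {α : Type*} {lt : Node → Node → Prop} {r : Node → α} {n : ℕ}
    {D : Finset Node} (h : CrystalSet lt r n D) : #D = n := by
  induction h with
  | empty => rfl
  | step i _ hγ _ ih =>
    rw [card_erase_of_mem hγ.1.1.1] at ih
    have := card_pos.2 ⟨_, hγ.1.1.1⟩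
    omega

theorem CrystalSet.of_goodNode_imp {α : Type*} {lt₁ lt₂ : Node → Node → Prop} {r : Node → α}
    {N n : ℕ} {D : Finset Node}
    (hgood : ∀ D, IsDiagram D → #D ≤ N → ∀ i γ, GoodNode D lt₁ r i γ → GoodNode D lt₂ r i γ)
    (h : CrystalSet lt₁ r n D) (hn : n ≤ N) : CrystalSet lt₂ r n D := by
  induction h with
  | empty => exact .empty
  | step i hD hγ hrest ih =>
    exact .step i hD (hgood _ hD ((CrystalSet.step i hD hγ hrest).card_eq.trans_le hn) i _ hγ)
      (ih (by omega))

theorem res_eq_of_modEq {e : ℕ} {s v : Fin 2 → ℤ} (h : ∀ c, v c ≡ s c [ZMOD e]) :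
    res e v = res e s := by
  funext γ
  exact (ZMod.intCast_eq_intCast_iff _ _ _).2 ((h _).add_left _)

theorem uglovSet_eq_kleshchevNeg_general (e : ℕ) (he : 1 < e) (n : ℕ) (s₀ s₁ v₀ v₁ : ℤ)
    (h₀ : Int.ModEq (e : ℤ) v₀ s₀) (h₁ : Int.ModEq (e : ℤ) v₁ s₁)
    (hn : (n : ℤ) - 1 < s₁ - s₀) :
    ∀ D : Finset Node, UglovSet e ![s₀, s₁] n D ↔ KleshchevNeg e ![v₀, v₁] n D := by
  intro D
  have hres : res e ![v₀, v₁] = res e ![s₀, s₁] := res_eq_of_modEq (Fin.forall_fin_two.2 ⟨h₀, h₁⟩)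
  have hgood : ∀ D' : Finset Node, IsDiagram D' → #D' ≤ n → ∀ i γ,
      GoodNode D' (chargeLT ![s₀, s₁]) (res e ![s₀, s₁]) i γ ↔
        GoodNode D' negLT (res e ![s₀, s₁]) i γ := fun D' hD' hD'n =>
    goodNode_chargeLT_iff_negLT he hD' (show (#D' : ℤ) ≤ s₁ - s₀ by omega)
  unfold UglovSet KleshchevNeg
  rw [hres]
  exact ⟨fun h => h.of_goodNode_imp (fun D' hD' hD'n i γ => (hgood D' hD' hD'n i γ).1) le_rfl,
    fun h => h.of_goodNode_imp (fun D' hD' hD'n i γ => (hgood D' hD' hD'n i γ).2) le_rfl⟩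

/-- if `s₁ - s₀ > n - 1` then `Φ_{e,n}^{(s₀,s₁)} = Φ_{e,n}^{(v₀,v₁)₋}`. -/
theorem uglovSet_eq_kleshchevNeg (e : ℕ) (he : 1 < e) (n : ℕ) (s₀ s₁ v₀ v₁ : ℤ)
    (hv₀ : 0 ≤ v₀ ∧ v₀ < e) (hv₁ : 0 ≤ v₁ ∧ v₁ < e)
    (h₀ : Int.ModEq (e : ℤ) v₀ s₀) (h₁ : Int.ModEq (e : ℤ) v₁ s₁)
    (hn : (n : ℤ) - 1 < s₁ - s₀) :
    ∀ D : Finset Node, UglovSet e ![s₀, s₁] n D ↔ KleshchevNeg e ![v₀, v₁] n D :=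
  uglovSet_eq_kleshchevNeg_general e he n s₀ s₁ v₀ v₁ h₀ h₁ hn

end UglovPaper
end

section
/- Fix an integer e>1, a charge (s_0,s_1)∈ℤ² with s_0 − s_1 > n − 1, and (v_0,v_1)∈{0,…,e−1}² with v_0 ≡ s_0 (mod e) and v_1 ≡ s_1 (mod e). Let λ be a bipartition of rank n, let γ be a removable i-node of λ and let γ' be an addable or removable i-node of λ (same residue i mod e). Then γ <_{(s_0,s_1)} γ' if and only if γ <_{(v_0,v_1)+} γ'. -/
open Finset

/-!
Inside one component, a removable node `(a, b, c)` and an addable or removable node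
`(a', b', c)` satisfy `b ≤ b'` when `a' ≤ a`, `b' ≤ b` when `a < a'`, and `b' ∈ {b, b + 1}`
when `a' = a`; the last option `b' = b + 1` is excluded by the residue condition since `e > 1`.
Hence `b - a < b' - a'` exactly when `a' < a`.

Across components, an addable or removable node `(a, b, c)` has `a + b ≤ |λ^(c)| + 2`, so its
content lies in `[s_c - |λ^(c)|, s_c + |λ^(c)|]`. When `s₀ - s₁ ≥ n` every such node of `λ^(0)`
therefore has content at least that of every such node of `λ^(1)`, and ties are broken by the
component exactly as in the asymptotic order.
-/

namespace UglovPaper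

variable {D : Finset Node} {a b a' b' : ℕ} {c c' : Fin 2}

theorem IsDiagram.one_le (hD : IsDiagram D) (h : (a, b, c) ∈ D) : 1 ≤ a ∧ 1 ≤ b :=
  hD.1 _ h

theorem IsDiagram.mem_of_col_le (hD : IsDiagram D) (h : (a, b, c) ∈ D) {j : ℕ} (hj : 1 ≤ j)
    (hjb : j ≤ b) : (a, j, c) ∈ D :=
  hD.2.1 _ h j hj hjb

theorem IsDiagram.mem_of_row_le (hD : IsDiagram D) (h : (a, b, c) ∈ D) {i : ℕ} (hi : 1 ≤ i)
    (hia : i ≤ a) : (i, b, c) ∈ D := by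
  induction a with
  | zero => omega
  | succ a ih =>
    rcases hia.eq_or_lt with rfl | hlt
    · exact h
    · exact ih (hD.2.2 _ h (by simp only [nrow]; omega)) (by omega)

/-- The hook of the node `(a, b, c)` inside `λ^(c)`, made of the nodes `(a, j, c)` with `j ≤ b`
and `(i, b, c)` with `i < a`, has `a + b - 1` nodes. -/
theorem IsDiagram.row_add_col_le (hD : IsDiagram D) (h : (a, b, c) ∈ D) :
    a + b ≤ #{γ ∈ D | ncomp γ = c} + 1 := by
  have hab := hD.one_le h
  let hook : ℕ → Node := fun k => if k ≤ b then (a, k, c) else (k - b, b, c)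
  have hmaps : Set.MapsTo hook ↑(Finset.Ico 1 (a + b)) ↑(D.filter fun γ => ncomp γ = c) := by
    intro k hk
    simp only [coe_Ico, Set.mem_Ico] at hk
    simp only [hook, coe_filter, Set.mem_ofPred_eq]
    split_ifs with hkb
    · exact ⟨hD.mem_of_col_le h hk.1 hkb, rfl⟩
    · exact ⟨hD.mem_of_row_le h (by omega) (by omega), rfl⟩
  have hinj : Set.InjOn hook (Finset.Ico 1 (a + b)) := by
    intro k hk l hl hkl
    simp only [coe_Ico, Set.mem_Ico] at hk hl
    simp only [hook] at hkl
    split_ifs at hkl <;> simp only [Prod.mk.injEq] at hkl <;> omega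
  have := Finset.card_le_card_of_injOn hook hmaps hinj
  simp only [Nat.card_Ico] at this
  omega

theorem card_filter_ncomp_zero_add_card_filter_ncomp_one (D : Finset Node) :
    #{γ ∈ D | ncomp γ = 0} + #{γ ∈ D | ncomp γ = 1} = #D := by
  rw [← Finset.card_filter_add_card_filter_not (s := D) (fun γ => ncomp γ = 0)]
  congr 2
  ext γ
  simp only [Fin.isValue, Finset.mem_filter, and_congr_right_iff]
  intro _
  omega

theorem Removable.succ_row_not_mem (hD : IsDiagram D) (h : Removable D (a, b, c)) :
    (a + 1, b, c) ∉ D := by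
  intro hmem
  have := h.2.2.2 _ (Finset.mem_erase.2 ⟨by simp, hmem⟩) (by simp [nrow, (hD.one_le h.1).1])
  simp [nrow, ncol, ncomp] at this

theorem Removable.succ_col_not_mem (hD : IsDiagram D) (h : Removable D (a, b, c)) :
    (a, b + 1, c) ∉ D := by
  intro hmem
  have := h.2.2.1 _ (Finset.mem_erase.2 ⟨by simp, hmem⟩) b (hD.one_le h.1).2
    (by simp only [ncol]; omega)
  simp [nrow, ncomp] at this

theorem Addable.mem_of_col_lt (h : Addable D (a, b, c)) {j : ℕ} (hj : 1 ≤ j) (hjb : j < b) :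
    (a, j, c) ∈ D := by
  have := h.2.2.1 _ (Finset.mem_insert_self _ _) j hj hjb.le
  simpa [nrow, ncomp, hjb.ne] using this

theorem Addable.succ_col_not_mem (hD : IsDiagram D) (h : Addable D (a, b, c)) :
    (a, b + 1, c) ∉ D := fun hmem =>
  h.1 (hD.mem_of_col_le hmem (h.2.1 _ (Finset.mem_insert_self _ _)).2 (by omega))

theorem mem_of_col_lt_of_addable_or_removable (hD : IsDiagram D)
    (h : Addable D (a, b, c) ∨ Removable D (a, b, c)) {j : ℕ} (hj : 1 ≤ j) (hjb : j < b) :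
    (a, j, c) ∈ D := by
  rcases h with h | h
  · exact h.mem_of_col_lt hj hjb
  · exact hD.mem_of_col_le h.1 hj hjb.le

theorem succ_col_not_mem_of_addable_or_removable (hD : IsDiagram D)
    (h : Addable D (a, b, c) ∨ Removable D (a, b, c)) : (a, b + 1, c) ∉ D := by
  rcases h with h | h
  · exact h.succ_col_not_mem hD
  · exact h.succ_col_not_mem hD

/-- An addable node lies in the diagram `insert γ D`, whose component `c` has one more node. -/
theorem row_add_col_le_of_addable_or_removable (hD : IsDiagram D)
    (h : Addable D (a, b, c) ∨ Removable D (a, b, c)) :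
    1 ≤ a ∧ 1 ≤ b ∧ a + b ≤ #{γ ∈ D | ncomp γ = c} + 2 := by
  rcases h with h | h
  · have hmem := Finset.mem_insert_self (a, b, c) D
    have hfilter : #{γ ∈ insert (a, b, c) D | ncomp γ = c} ≤ #{γ ∈ D | ncomp γ = c} + 1 := by
      rw [Finset.filter_insert]
      split_ifs
      · exact Finset.card_insert_le _ _
      · omega
    have := h.2.row_add_col_le hmem
    exact ⟨(h.2.one_le hmem).1, (h.2.one_le hmem).2, by omega⟩
  · have := hD.row_add_col_le h.1
    exact ⟨(hD.one_le h.1).1, (hD.one_le h.1).2, by omega⟩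

theorem sub_lt_sub_iff_row_lt_of_removable {e : ℕ} (he : 1 < e) (hD : IsDiagram D)
    (hγ : Removable D (a, b, c)) (hγ' : Addable D (a', b', c) ∨ Removable D (a', b', c))
    (hmod : (b : ℤ) - a ≡ b' - a' [ZMOD e]) : (b : ℤ) - a < b' - a' ↔ a' < a := by
  obtain ⟨ha, hb⟩ := hD.one_le hγ.1
  have ha' := (row_add_col_le_of_addable_or_removable hD hγ').1
  have hle : a' ≤ a → b ≤ b' := fun h => by
    by_contra hlt
    exact succ_col_not_mem_of_addable_or_removable hD hγ'
      (hD.mem_of_col_le (hD.mem_of_row_le hγ.1 ha' h) (by omega) (by omega))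
  have hge : a < a' → b' ≤ b := fun h => by
    by_contra hlt
    exact hγ.succ_row_not_mem hD
      (hD.mem_of_row_le (mem_of_col_lt_of_addable_or_removable hD hγ' hb (by omega)) (by omega) h)
  rcases lt_trichotomy a' a with h | rfl | h
  · have := hle h.le
    omega
  · have hsucc : b' ≤ b + 1 := by
      by_contra hlt
      exact hγ.succ_col_not_mem hD
        (mem_of_col_lt_of_addable_or_removable hD hγ' (by omega) (by omega))
    have heq : b' = b := by
      have hdvd := hmod.dvd
      have := hle le_rfl
      by_contra hne
      have h1 : (b' : ℤ) - a' - (b - a') = 1 := by omega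
      rw [h1] at hdvd
      have := Int.le_of_dvd one_pos hdvd
      omega
    omega
  · have := hge h
    omega

theorem chargeLT_iff_posLT_of_ncomp_eq {e : ℕ} (he : 1 < e) (hD : IsDiagram D)
    {s : Fin 2 → ℤ} (hγ : Removable D (a, b, c))
    (hγ' : Addable D (a', b', c) ∨ Removable D (a', b', c))
    (hres : res e s (a, b, c) = res e s (a', b', c)) :
    chargeLT s (a, b, c) (a', b', c) ↔ posLT (a, b, c) (a', b', c) := by
  have hmod := ((ZMod.intCast_eq_intCast_iff _ _ _).1 hres).add_right_cancel' (s c)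
  simp only [chargeLT, posLT, cont, nrow, ncol, ncomp, lt_self_iff_false, and_false, or_false,
    true_and, false_or, add_lt_add_iff_right] at hmod ⊢
  exact sub_lt_sub_iff_row_lt_of_removable he hD hγ hγ' hmod

theorem cont_le_cont_of_ncomp_one_of_ncomp_zero (hD : IsDiagram D) {s : Fin 2 → ℤ}
    (hs : (#D : ℤ) ≤ s 0 - s 1) (hx : Addable D (a, b, 1) ∨ Removable D (a, b, 1))
    (hy : Addable D (a', b', 0) ∨ Removable D (a', b', 0)) :
    cont s (a, b, 1) ≤ cont s (a', b', 0) := by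
  have hx := row_add_col_le_of_addable_or_removable hD hx
  have hy := row_add_col_le_of_addable_or_removable hD hy
  have := card_filter_ncomp_zero_add_card_filter_ncomp_one D
  simp only [cont, nrow, ncol, ncomp]
  omega

theorem chargeLT_iff_posLT_of_ncomp_ne (hD : IsDiagram D) {s : Fin 2 → ℤ}
    (hs : (#D : ℤ) ≤ s 0 - s 1) (hγ : Addable D (a, b, c) ∨ Removable D (a, b, c))
    (hγ' : Addable D (a', b', c') ∨ Removable D (a', b', c')) (hc : c ≠ c') :
    chargeLT s (a, b, c) (a', b', c') ↔ posLT (a, b, c) (a', b', c') := by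
  fin_cases c <;> fin_cases c' <;> simp only [ne_eq, not_true_eq_false] at hc
  · have := cont_le_cont_of_ncomp_one_of_ncomp_zero hD hs hγ' hγ
    simp only [chargeLT, posLT, nrow, ncomp]
    simp only [Fin.zero_eta, Fin.mk_one] at this ⊢
    omega
  · have := cont_le_cont_of_ncomp_one_of_ncomp_zero hD hs hγ hγ'
    simp only [chargeLT, posLT, nrow, ncomp]
    simp only [Fin.zero_eta, Fin.mk_one] at this ⊢
    omega

theorem chargeLT_iff_posLT_general (e : ℕ) (he : 1 < e) (n : ℕ) (s₀ s₁ : ℤ)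
    (hn : (n : ℤ) - 1 < s₀ - s₁)
    (D : Finset Node) (hD : IsDiagram D) (hcard : D.card = n)
    (γ γ' : Node) (hγ : Removable D γ) (hγ' : Addable D γ' ∨ Removable D γ')
    (hres : res e ![s₀, s₁] γ = res e ![s₀, s₁] γ') :
    chargeLT ![s₀, s₁] γ γ' ↔ posLT γ γ' := by
  obtain ⟨a, b, c⟩ := γ
  obtain ⟨a', b', c'⟩ := γ'
  by_cases hc : c = c'
  · subst hc
    exact chargeLT_iff_posLT_of_ncomp_eq he hD hγ hγ' hres
  · refine chargeLT_iff_posLT_of_ncomp_ne hD ?_ (Or.inr hγ) hγ' hc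
    simp only [Matrix.cons_val_zero, Matrix.cons_val_one]
    omega

/-- if `s₀ - s₁ > n - 1` then, for a removable `i`-node `γ` and an addable or
removable `i`-node `γ'` of a bipartition of rank `n`, `γ <_{(s₀,s₁)} γ'` iff
`γ <_{(v₀,v₁)₊} γ'`. -/
theorem chargeLT_iff_posLT (e : ℕ) (he : 1 < e) (n : ℕ) (s₀ s₁ v₀ v₁ : ℤ)
    (hv₀ : 0 ≤ v₀ ∧ v₀ < e) (hv₁ : 0 ≤ v₁ ∧ v₁ < e)
    (h₀ : Int.ModEq (e : ℤ) v₀ s₀) (h₁ : Int.ModEq (e : ℤ) v₁ s₁)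
    (hn : (n : ℤ) - 1 < s₀ - s₁)
    (D : Finset Node) (hD : IsDiagram D) (hcard : D.card = n)
    (γ γ' : Node) (hγ : Removable D γ) (hγ' : Addable D γ' ∨ Removable D γ')
    (hres : res e ![s₀, s₁] γ = res e ![s₀, s₁] γ') :
    chargeLT ![s₀, s₁] γ γ' ↔ posLT γ γ' :=
  chargeLT_iff_posLT_general e he n s₀ s₁ hn D hD hcard γ γ' hγ hγ' hres

end UglovPaper
end

section
/- Let (s_0,s_1)∈ℕ² with s_0 ≤ s_1 and let λ be a bipartition of rank n whose s-symbol S_s(λ) is standard. Then the greedy construction of θ is well defined: for each p = m+s_0, m+s_0−1, …, 1, there exists an entry of the top row β^(1) not chosen at an earlier step that is ≤ β^(0)_p. Consequently θ is an injective map from the entries of β^(0) to the entries of β^(1) satisfying θ(β^(0)_j) ≤ β^(0)_j for all 1≤j≤m+s_0. -/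
open Finset

/-!
At step `k` the greedy construction handles `p = m + s₀ - k`. Standardness, together with the
strict decrease of `β⁽¹⁾`, puts the `k + 1` distinct entries `β⁽¹⁾_j`, `p + s₁ - s₀ ≤ j ≤ m + s₁`,
below `β⁽⁰⁾_p`. Only `k` entries have been used at earlier steps, so one of them is still
available. Injectivity holds because the entry chosen at a step is new at that step.
-/

namespace UglovPaper

def IsStandardSymbol (s : Fin 2 → ℕ) (D : Finset Node) : Prop :=
  ∀ i : ℕ, 1 ≤ i → part D 1 (i + (s 1 - s 0)) ≤ part D 0 i

def thetaCandidates (s : Fin 2 → ℕ) (m : ℕ) (D : Finset Node) (k : ℕ) : Finset ℕ :=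
  ((Icc 1 (m + s 1)).image (beta s m D 1)).filter
    (fun y => y ∉ thetaList s m D k ∧ y ≤ beta s m D 0 (m + s 0 - k))

def thetaStep (s : Fin 2 → ℕ) (m : ℕ) (D : Finset Node) (k : ℕ) : ℕ :=
  WithBot.unbotD 0 (thetaCandidates s m D k).max

section

variable {s : Fin 2 → ℕ} {m : ℕ} {D : Finset Node}

theorem thetaList_eq_map_range (K : ℕ) :
    thetaList s m D K = (List.range K).map (thetaStep s m D) := by
  induction K with
  | zero => rfl
  | succ K ih =>
    rw [List.range_succ, List.map_append, ← ih]
    rfl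

theorem theta_eq_thetaStep {p : ℕ} (hp₁ : 1 ≤ p) (hp : p ≤ m + s 0) :
    theta s m D p = thetaStep s m D (m + s 0 - p) := by
  have hlt : m + s 0 - p < (thetaList s m D (m + s 0)).length := by
    rw [thetaList_eq_map_range, List.length_map, List.length_range]
    omega
  rw [theta, List.getD_eq_getElem _ _ hlt]
  simp only [thetaList_eq_map_range, List.getElem_map, List.getElem_range]

theorem thetaStep_mem {k : ℕ} (h : (thetaCandidates s m D k).Nonempty) :
    thetaStep s m D k ∈ thetaCandidates s m D k := by
  rw [thetaStep, ← coe_max' h, WithBot.unbotD_coe]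
  exact max'_mem _ h

theorem thetaStep_ne {k k' : ℕ} (hk : k < k') (h : (thetaCandidates s m D k').Nonempty) :
    thetaStep s m D k ≠ thetaStep s m D k' := by
  have hused : thetaStep s m D k ∈ thetaList s m D k' := by
    rw [thetaList_eq_map_range]
    exact List.mem_map_of_mem (List.mem_range.2 hk)
  have hnew : thetaStep s m D k' ∉ thetaList s m D k' := (mem_filter.1 (thetaStep_mem h)).2.1
  exact fun heq => hnew (heq ▸ hused)

theorem part_succ_le (hD : IsDiagram D) (c : Fin 2) {a : ℕ} (ha : 1 ≤ a) :
    part D c (a + 1) ≤ part D c a := by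
  refine card_le_card_of_injOn (fun γ => (a, γ.2.1, γ.2.2)) ?_ ?_
  · rintro γ hγ
    simp only [coe_filter] at hγ ⊢
    obtain ⟨hγD, hrow, hcomp⟩ := hγ
    refine ⟨?_, rfl, hcomp⟩
    have hup := hD.2.2 γ hγD (by omega)
    rwa [hrow, Nat.add_sub_cancel] at hup
  · intro γ hγ γ' hγ' h
    have hrow := (mem_filter.1 (mem_coe.1 hγ)).2.1
    have hrow' := (mem_filter.1 (mem_coe.1 hγ')).2.1
    simp only [Prod.mk.injEq, true_and] at h
    exact Prod.ext (hrow.trans hrow'.symm) (Prod.ext h.1 h.2)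

theorem part_antitoneOn (hD : IsDiagram D) (c : Fin 2) : AntitoneOn (part D c) (Set.Ici 1) :=
  antitoneOn_nat_Ici_of_succ_le fun _ ha => part_succ_le hD c ha

theorem beta_strictAntiOn (hD : IsDiagram D) (c : Fin 2) :
    StrictAntiOn (beta s m D c) (Set.Icc 1 (m + s c)) := by
  intro i hi j hj hij
  have hpart := part_antitoneOn hD c hi.1 (le_trans hi.1 hij.le) hij.le
  simp only [beta, Set.mem_Icc] at hi hj ⊢
  omega

theorem beta_one_le_beta_zero (hD : IsDiagram D) (hstd : IsStandardSymbol s D) {p j : ℕ}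
    (hp : 1 ≤ p) (hj : p + (s 1 - s 0) ≤ j) :
    beta s m D 1 j ≤ beta s m D 0 p := by
  have hpart := part_antitoneOn hD 1 (show 1 ≤ p + (s 1 - s 0) by omega)
    (show 1 ≤ j by omega) hj
  have := hstd p hp
  simp only [beta]
  omega

theorem thetaCandidates_nonempty (hD : IsDiagram D) (hs : s 0 ≤ s 1)
    (hstd : IsStandardSymbol s D) {k : ℕ} (hk : k < m + s 0) :
    (thetaCandidates s m D k).Nonempty := by
  set p := m + s 0 - k
  have hbelow : Icc (p + (s 1 - s 0)) (m + s 1) ⊆ Icc 1 (m + s 1) :=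
    Icc_subset_Icc_left (by omega)
  have hcard : #(thetaList s m D k).toFinset < #((Icc (p + (s 1 - s 0)) (m + s 1)).image
      (beta s m D 1)) := by
    rw [card_image_of_injOn ((beta_strictAntiOn hD 1).injOn.mono (by rw [← coe_Icc]; exact coe_subset.2 hbelow)),
      Nat.card_Icc]
    calc #(thetaList s m D k).toFinset ≤ (thetaList s m D k).length := List.toFinset_card_le _
      _ = k := by rw [thetaList_eq_map_range, List.length_map, List.length_range]
      _ < _ := by omega
  obtain ⟨y, hy, hfree⟩ := exists_mem_notMem_of_card_lt_card hcard
  obtain ⟨j, hj, rfl⟩ := mem_image.1 hy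
  refine ⟨beta s m D 1 j, mem_filter.2 ⟨mem_image_of_mem _ (hbelow hj), ?_, ?_⟩⟩
  · exact mt List.mem_toFinset.2 hfree
  · exact beta_one_le_beta_zero hD hstd (by omega) (mem_Icc.1 hj).1

end

theorem theta_well_defined_general (s : Fin 2 → ℕ) (hs : s 0 ≤ s 1) (m : ℕ)
    (D : Finset Node) (hD : IsDiagram D)
    (hstd : ∀ i : ℕ, 1 ≤ i → part D 1 (i + (s 1 - s 0)) ≤ part D 0 i) :
    (∀ k : ℕ, k < m + s 0 →
      (((Finset.Icc 1 (m + s 1)).image (beta s m D 1)).filter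
        (fun y => y ∉ thetaList s m D k ∧ y ≤ beta s m D 0 (m + s 0 - k))).Nonempty) ∧
    (∀ p : ℕ, 1 ≤ p → p ≤ m + s 0 →
      theta s m D p ∈ (Finset.Icc 1 (m + s 1)).image (beta s m D 1) ∧
      theta s m D p ≤ beta s m D 0 p) ∧
    Set.InjOn (theta s m D) (Set.Icc 1 (m + s 0)) := by
  have hne : ∀ k, k < m + s 0 → (thetaCandidates s m D k).Nonempty :=
    fun _ hk => thetaCandidates_nonempty hD hs hstd hk
  refine ⟨hne, fun p hp₁ hp => ?_, fun p ⟨hp₁, hp⟩ q ⟨hq₁, hq⟩ hpq => ?_⟩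
  · have hmem := mem_filter.1 (thetaStep_mem (hne (m + s 0 - p) (by omega)))
    rw [theta_eq_thetaStep hp₁ hp]
    rw [Nat.sub_sub_self hp] at hmem
    exact ⟨hmem.1, hmem.2.2⟩
  · rw [theta_eq_thetaStep hp₁ hp, theta_eq_thetaStep hq₁ hq] at hpq
    by_contra hne'
    rcases Nat.lt_or_gt_of_ne hne' with hlt | hlt
    · exact thetaStep_ne (by omega) (hne _ (by omega)) hpq.symm
    · exact thetaStep_ne (by omega) (hne _ (by omega)) hpq

/-- for a bipartition with standard `s`-symbol the greedy construction of
`θ` never gets stuck, and `θ` is an injection from the bottom-row entries to the top-row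
entries with `θ(β⁽⁰⁾_p) ≤ β⁽⁰⁾_p`. -/
theorem theta_well_defined (s : Fin 2 → ℕ) (hs : s 0 ≤ s 1) (m n : ℕ)
    (D : Finset Node) (hD : IsDiagram D) (hcard : D.card = n)
    (hm : ∀ c : Fin 2, part D c (m + s c) = 0)
    (hstd : ∀ i : ℕ, 1 ≤ i → part D 1 (i + (s 1 - s 0)) ≤ part D 0 i) :
    (∀ k : ℕ, k < m + s 0 →
      (((Finset.Icc 1 (m + s 1)).image (beta s m D 1)).filter
        (fun y => y ∉ thetaList s m D k ∧ y ≤ beta s m D 0 (m + s 0 - k))).Nonempty) ∧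
    (∀ p : ℕ, 1 ≤ p → p ≤ m + s 0 →
      theta s m D p ∈ (Finset.Icc 1 (m + s 1)).image (beta s m D 1) ∧
      theta s m D p ≤ beta s m D 0 p) ∧
    Set.InjOn (theta s m D) (Set.Icc 1 (m + s 0)) :=
  theta_well_defined_general s hs m D hD hstd

end UglovPaper
end
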